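/- Let V satisfy (H1)–(H3), let ε ∈ (0,1) be such that (H3) holds with the constants 1−ε and 1+ε, and set Δ := 1 + inf{V(r) : r ≥ α, r ∉ (1−ε, 1+ε)}; assume Δ > 0. If an N-point configuration S ⊂ ℝ² satisfies E(S) ≤ −6N + C N^{1/2}, then the number of points of S having fewer than six points of S at distance in [1−ε, 1+ε] is at most (C/Δ) N^{1/2}. -/

import Mathlib

/-!
Only pairs at distance at most `β` interact, and a finite energy keeps all points `α`-separated,
so by (H3) each point has at most six interacting partners. A partner at a neighbour distance
costs `-1`, any other costs at least `Δ - 1`, so each point contributes at least `-6` to the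
energy, and at least `-6 + Δ` if it has fewer than six neighbours. Summing over the points gives
`-6N + Δ · #{boundary points} ≤ E(S) ≤ -6N + C √N`.
-/

open Set Metric
open scoped Classical

noncomputable section

abbrev E2 := EuclideanSpace ℝ (Fin 2)

/-- Hypotheses (H1)-(H3) on the pair potential. -/
def SatisfiesH (V : ℝ → EReal) (α β : ℝ) : Prop :=
  α ∈ Set.Ioc (0 : ℝ) 1 ∧ 1 ≤ β ∧
  V 1 = -1 ∧ (∀ r : ℝ, 0 < r → r ≠ 1 → -1 < V r) ∧
  (∀ r : ℝ, 0 < r → r < α → V r = ⊤) ∧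
  (∀ r : ℝ, β < r → V r = 0) ∧
  ContinuousOn V (Set.Ioo α β) ∧
  (∀ (c : E2) (T : Finset E2),
    (∀ x ∈ T, dist x c ≤ β) → (∀ x ∈ T, α ≤ dist x c) →
    (∀ x ∈ T, ∀ y ∈ T, x ≠ y → α ≤ dist x y) → T.card ≤ 6)

/-- Hypothesis (H3) for a pair of constants `a ≤ b`. -/
def H3cond (a b : ℝ) : Prop :=
  ∀ (c : E2) (T : Finset E2),
    (∀ x ∈ T, dist x c ≤ b) → (∀ x ∈ T, a ≤ dist x c) →
    (∀ x ∈ T, ∀ y ∈ T, x ≠ y → a ≤ dist x y) → T.card ≤ 6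

/-- The pair-interaction energy of an `N`-point configuration (ordered pairs). -/
def energy {N : ℕ} (V : ℝ → EReal) (x : Fin N → E2) : EReal :=
  ∑ i : Fin N, ∑ j : Fin N, if i ≠ j then V (dist (x i) (x j)) else 0

open Finset

lemma EReal.coe_finset_sum {ι : Type*} (s : Finset ι) (f : ι → ℝ) :
    ((∑ a ∈ s, f a : ℝ) : EReal) = ∑ a ∈ s, (f a : EReal) :=
  map_sum (⟨⟨Real.toEReal, EReal.coe_zero⟩, EReal.coe_add⟩ : ℝ →+ EReal) f s

lemma EReal.sum_eq_top_of_coe_le {ι : Type*} {s : Finset ι} {f : ι → EReal} {c : ℝ}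
    (hc : ∀ a ∈ s, (c : EReal) ≤ f a) {a : ι} (ha : a ∈ s) (htop : f a = ⊤) :
    ∑ b ∈ s, f b = ⊤ := by
  rw [← add_sum_erase s f ha, htop]
  refine EReal.top_add_of_ne_bot (ne_bot_of_le_ne_bot ?_
    (sum_le_sum fun b hb => hc b (mem_of_mem_erase hb)))
  rw [sum_const, ← EReal.coe_nsmul]
  exact EReal.coe_ne_bot _

lemma EReal.eq_coe_sub_one_of_coe_eq_one_add {Δ : ℝ} {s : EReal} (h : (Δ : EReal) = 1 + s) :
    s = ((Δ - 1 : ℝ) : EReal) := by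
  induction s using EReal.rec with
  | bot => simp at h
  | top =>
    rw [EReal.add_top_of_ne_bot (by rw [← EReal.coe_one]; exact EReal.coe_ne_bot 1)] at h
    simp at h
  | coe r => norm_cast at h ⊢; linarith

lemma coe_sub_one_le_of_eq_one_add_sInf {V : ℝ → EReal} {α ε Δ : ℝ}
    (hΔ : (Δ : EReal) = 1 + sInf (V '' {r : ℝ | α ≤ r ∧ r ∉ Ioo (1 - ε) (1 + ε)}))
    {r : ℝ} (hr : α ≤ r) (hnbr : r ∉ Ioo (1 - ε) (1 + ε)) :
    ((Δ - 1 : ℝ) : EReal) ≤ V r :=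
  EReal.eq_coe_sub_one_of_coe_eq_one_add hΔ ▸ sInf_le ⟨r, ⟨hr, hnbr⟩, rfl⟩

lemma H3cond.card_filter_dist_le {a b : ℝ} (h : H3cond a b) {ι : Type*} [Fintype ι]
    [DecidableEq ι] {x : ι → E2} (hinj : Function.Injective x)
    (hsep : Pairwise fun i j => a ≤ dist (x i) (x j)) (i : ι) :
    #{j | j ≠ i ∧ dist (x i) (x j) ≤ b} ≤ 6 := by
  rw [← card_image_of_injective _ hinj]
  refine h (x i) _ ?_ ?_ ?_ <;>
    simp only [Finset.mem_image, Finset.mem_filter, Finset.mem_univ, true_and]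
  · rintro _ ⟨j, ⟨-, hj⟩, rfl⟩
    rwa [dist_comm]
  · rintro _ ⟨j, ⟨hji, -⟩, rfl⟩
    rw [dist_comm]
    exact hsep hji.symm
  · rintro _ ⟨j, -, rfl⟩ _ ⟨k, -, rfl⟩ hjk
    exact hsep (ne_of_apply_ne x hjk)

def stepPotential (ε β Δ r : ℝ) : ℝ :=
  if β < r then 0 else if r ∈ Icc (1 - ε) (1 + ε) then -1 else Δ - 1

lemma neg_six_add_le_sum_ite {ι : Type*} (T : Finset ι) (p : ι → Prop) [DecidablePred p]
    {Δ : ℝ} (hΔ0 : 0 ≤ Δ) (hΔ1 : Δ ≤ 1) (hT : #T ≤ 6) (b : Prop) [Decidable b]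
    (hb : b → #(T.filter p) < 6) :
    -6 + (if b then Δ else 0) ≤ ∑ j ∈ T, if p j then -1 else Δ - 1 := by
  rw [sum_ite, sum_const, sum_const, nsmul_eq_mul, nsmul_eq_mul, mul_neg_one]
  have hKL : (#(T.filter p) : ℝ) + #(T.filter (¬p ·)) ≤ 6 := by
    exact_mod_cast (card_filter_add_card_filter_not p).le.trans hT
  have hK : b → (#(T.filter p) : ℝ) ≤ 5 := fun hb' => by
    exact_mod_cast Nat.le_of_lt_succ (hb hb')
  have hL : (0 : ℝ) ≤ #(T.filter (¬p ·)) := Nat.cast_nonneg _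
  set K : ℝ := (#(T.filter p) : ℝ)
  set L : ℝ := (#(T.filter (¬p ·)) : ℝ)
  split_ifs with hb'
  · have hK := hK hb'
    -- `-K + L (Δ - 1) - (-6 + Δ) = (6 - K - L)(1 - Δ) + (5 - K) Δ`
    nlinarith [mul_nonneg (by linarith : 0 ≤ 6 - K - L) (by linarith : 0 ≤ 1 - Δ),
      mul_nonneg (by linarith : 0 ≤ 5 - K) hΔ0]
  · nlinarith [mul_nonneg hL hΔ0]

lemma neg_six_add_le_sum_stepPotential {ι : Type*} [Fintype ι] [DecidableEq ι] {x : ι → E2}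
    {ε β Δ : ℝ} (hΔ0 : 0 ≤ Δ) (hΔ1 : Δ ≤ 1) (i : ι)
    (hpack : #{j | j ≠ i ∧ dist (x i) (x j) ≤ β} ≤ 6) :
    -6 + (if #{j | j ≠ i ∧ dist (x i) (x j) ∈ Icc (1 - ε) (1 + ε)} < 6 then Δ else 0) ≤
      ∑ j, if i ≠ j then stepPotential ε β Δ (dist (x i) (x j)) else 0 := by
  have hsum : (∑ j, if i ≠ j then stepPotential ε β Δ (dist (x i) (x j)) else 0) =
      ∑ j ∈ {j | j ≠ i ∧ dist (x i) (x j) ≤ β},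
        if dist (x i) (x j) ∈ Icc (1 - ε) (1 + ε) then -1 else Δ - 1 := by
    rw [sum_filter]
    refine sum_congr rfl fun j _ => ?_
    unfold stepPotential
    by_cases hij : i = j
    · simp [hij]
    · by_cases hβ : dist (x i) (x j) ≤ β
      · simp [hij, Ne.symm hij, hβ, not_lt.mpr hβ]
      · simp [hij, hβ, lt_of_not_ge hβ]
  rw [hsum]
  refine neg_six_add_le_sum_ite _ _ hΔ0 hΔ1 hpack _
    fun hbad => (Finset.card_le_card fun j => ?_).trans_lt hbad
  simp only [Finset.mem_filter, Finset.mem_univ, true_and]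
  exact fun ⟨⟨hji, _⟩, hnbr⟩ => ⟨hji, hnbr⟩

lemma neg_six_mul_card_add_le_sum_sum_stepPotential {ι : Type*} [Fintype ι] [DecidableEq ι]
    {x : ι → E2} {ε β Δ : ℝ} (hΔ0 : 0 ≤ Δ) (hΔ1 : Δ ≤ 1)
    (hpack : ∀ i, #{j | j ≠ i ∧ dist (x i) (x j) ≤ β} ≤ 6) :
    -6 * (Fintype.card ι : ℝ) +
        Δ * #{i | #{j | j ≠ i ∧ dist (x i) (x j) ∈ Icc (1 - ε) (1 + ε)} < 6} ≤
      ∑ i, ∑ j, if i ≠ j then stepPotential ε β Δ (dist (x i) (x j)) else 0 :=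
  calc _ = ∑ i, (-6 +
        if #{j | j ≠ i ∧ dist (x i) (x j) ∈ Icc (1 - ε) (1 + ε)} < 6 then Δ else 0) := by
        rw [sum_add_distrib, ← sum_filter]
        simp [mul_comm]
    _ ≤ _ := sum_le_sum fun i _ => neg_six_add_le_sum_stepPotential hΔ0 hΔ1 i (hpack i)

namespace SatisfiesH

variable {V : ℝ → EReal} {α β : ℝ}

lemma h3cond (hV : SatisfiesH V α β) : H3cond α β := hV.2.2.2.2.2.2.2

lemma neg_one_le (hV : SatisfiesH V α β) {r : ℝ} (hr : 0 < r) : (-1 : EReal) ≤ V r := by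
  obtain ⟨-, -, hV1, hVgt, -⟩ := hV
  rcases eq_or_ne r 1 with rfl | hr1
  · exact hV1.ge
  · exact (hVgt r hr hr1).le

lemma pairwise_le_dist {N : ℕ} {x : Fin N → E2} (hV : SatisfiesH V α β)
    (hinj : Function.Injective x) (hE : energy V x ≠ ⊤) :
    Pairwise fun i j => α ≤ dist (x i) (x j) := by
  have ⟨_, _, _, _, hcore, _⟩ := hV
  intro i j hij
  by_contra! hlt
  have hterm : ∀ p : Fin N × Fin N,
      ((-1 : ℝ) : EReal) ≤ if p.1 ≠ p.2 then V (dist (x p.1) (x p.2)) else 0 := by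
    rintro ⟨k, l⟩
    split_ifs with hkl
    · simpa using hV.neg_one_le (dist_pos.mpr (hinj.ne hkl))
    · simp
  apply hE
  rw [energy, ← Fintype.sum_prod_type']
  refine EReal.sum_eq_top_of_coe_le (fun p _ => hterm p) (Finset.mem_univ (i, j)) ?_
  simp only [if_pos hij]
  exact hcore _ (dist_pos.mpr (hinj.ne hij)) hlt

lemma stepPotential_le (hV : SatisfiesH V α β) {ε Δ : ℝ}
    (hΔV : ∀ r, α ≤ r → r ∉ Ioo (1 - ε) (1 + ε) → ((Δ - 1 : ℝ) : EReal) ≤ V r)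
    {r : ℝ} (hr : α ≤ r) : (stepPotential ε β Δ r : EReal) ≤ V r := by
  have ⟨⟨hα, _⟩, _, _, _, _, hV0, _⟩ := hV
  unfold stepPotential
  split_ifs with hβ hnbr
  · rw [hV0 r hβ, EReal.coe_zero]
  · simpa using hV.neg_one_le (hα.trans_le hr)
  · exact hΔV r hr fun h => hnbr (Ioo_subset_Icc_self h)

lemma sum_stepPotential_le_energy (hV : SatisfiesH V α β) {ε Δ : ℝ}
    (hΔV : ∀ r, α ≤ r → r ∉ Ioo (1 - ε) (1 + ε) → ((Δ - 1 : ℝ) : EReal) ≤ V r)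
    {N : ℕ} {x : Fin N → E2} (hsep : Pairwise fun i j => α ≤ dist (x i) (x j)) :
    ((∑ i, ∑ j, if i ≠ j then stepPotential ε β Δ (dist (x i) (x j)) else 0 : ℝ) :
      EReal) ≤ energy V x := by
  rw [EReal.coe_finset_sum]
  refine sum_le_sum fun i _ => ?_
  rw [EReal.coe_finset_sum]
  refine sum_le_sum fun j _ => ?_
  split_ifs with hij
  · exact hV.stepPotential_le hΔV (hsep hij)
  · simp

lemma le_one_of_eq_one_add_sInf (hV : SatisfiesH V α β) {ε Δ : ℝ}
    (hΔ : (Δ : EReal) = 1 + sInf (V '' {r : ℝ | α ≤ r ∧ r ∉ Ioo (1 - ε) (1 + ε)})) :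
    Δ ≤ 1 := by
  obtain ⟨⟨-, hα1⟩, hβ1, -, -, -, hV0, -⟩ := hV
  -- any `r > max β (1 + ε)` lies in the set and has `V r = 0`
  set r := max β (1 + ε) + 1
  have hβr : β < r := by simp only [r]; linarith [le_max_left β (1 + ε)]
  have hεr : 1 + ε < r := by simp only [r]; linarith [le_max_right β (1 + ε)]
  have h0 := coe_sub_one_le_of_eq_one_add_sInf hΔ (by linarith) fun h => h.2.not_gt hεr
  rw [hV0 r hβr, ← EReal.coe_zero, EReal.coe_le_coe_iff] at h0
  linarith

end SatisfiesH

theorem boundary_atom_count_general (V : ℝ → EReal) (α β : ℝ) (hV : SatisfiesH V α β)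
    (ε : ℝ)
    (Δ : ℝ) (hΔ : (Δ : EReal) = 1 + sInf (V '' {r : ℝ | α ≤ r ∧ r ∉ Set.Ioo (1 - ε) (1 + ε)}))
    (hΔpos : 0 < Δ) (C : ℝ) (N : ℕ) (x : Fin N → E2) (hinj : Function.Injective x)
    (hE : energy V x ≤ ((-6 * (N : ℝ) + C * Real.sqrt (N : ℝ) : ℝ) : EReal)) :
    ((Finset.univ.filter (fun i : Fin N =>
        (Finset.univ.filter (fun j : Fin N =>
          j ≠ i ∧ dist (x i) (x j) ∈ Set.Icc (1 - ε) (1 + ε))).card < 6)).card : ℝ) ≤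
      (C / Δ) * Real.sqrt (N : ℝ) := by
  have hsep := hV.pairwise_le_dist hinj (hE.trans_lt (EReal.coe_lt_top _)).ne
  have hlow := neg_six_mul_card_add_le_sum_sum_stepPotential (ε := ε) hΔpos.le
    (hV.le_one_of_eq_one_add_sInf hΔ) fun i => hV.h3cond.card_filter_dist_le hinj hsep i
  have henergy := hV.sum_stepPotential_le_energy
    (fun _ => coe_sub_one_le_of_eq_one_add_sInf hΔ) hsep
  have hfin := EReal.coe_le_coe_iff.mp (((EReal.coe_le_coe_iff.mpr hlow).trans henergy).trans hE)
  rw [Fintype.card_fin] at hfin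
  rw [div_mul_eq_mul_div, le_div_iff₀ hΔpos]
  linarith

/-- in a low-energy configuration, the number of points with fewer than
six neighbours is at most `(C/Δ) N^{1/2}`. -/
theorem boundary_atom_count (V : ℝ → EReal) (α β : ℝ) (hV : SatisfiesH V α β)
    (ε : ℝ) (hε : ε ∈ Set.Ioo (0 : ℝ) 1) (h3' : H3cond (1 - ε) (1 + ε))
    (Δ : ℝ) (hΔ : (Δ : EReal) = 1 + sInf (V '' {r : ℝ | α ≤ r ∧ r ∉ Set.Ioo (1 - ε) (1 + ε)}))
    (hΔpos : 0 < Δ) (C : ℝ) (N : ℕ) (x : Fin N → E2) (hinj : Function.Injective x)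
    (hE : energy V x ≤ ((-6 * (N : ℝ) + C * Real.sqrt (N : ℝ) : ℝ) : EReal)) :
    ((Finset.univ.filter (fun i : Fin N =>
        (Finset.univ.filter (fun j : Fin N =>
          j ≠ i ∧ dist (x i) (x j) ∈ Set.Icc (1 - ε) (1 + ε))).card < 6)).card : ℝ) ≤
      (C / Δ) * Real.sqrt (N : ℝ) :=
  boundary_atom_count_general V α β hV ε Δ hΔ hΔpos C N x hinj hE
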